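/- Let K be the field of formal Laurent series over ℂ, and let x, y, z ∈ K satisfy x² + y² + z² − xyz ≠ 4. Then there exist a, b, c, d ∈ K such that a + d = y, b − c + dx = z, and ad − bc = 1. -/

import Mathlib

open PowerSeries HahnSeries

noncomputable def rc (f : PowerSeries ℂ) : ℕ → ℂ
  | 0 => 1
  | (n+1) => (PowerSeries.coeff (n+1) f
      - ∑ i ∈ (Finset.range n).attach, rc f (i.1+1) * rc f (n - i.1)) / 2
  decreasing_by
  · have := i.2; simp only [Finset.mem_range] at this; omega
  · have := i.2; simp only [Finset.mem_range] at this; omega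

lemma rc_sq (f : PowerSeries ℂ) (hf : PowerSeries.constantCoeff f = 1) :
    (PowerSeries.mk (rc f)) ^ 2 = f := by
  ext n
  rw [pow_two, PowerSeries.coeff_mul]
  rw [Finset.Nat.sum_antidiagonal_eq_sum_range_succ_mk]
  cases n with
  | zero => simp [rc, hf]
  | succ n =>
    rw [Finset.sum_range_succ, Finset.sum_range_succ']
    simp only [PowerSeries.coeff_mk]
    have h0 : rc f 0 = 1 := by simp [rc]
    have hrec : rc f (n+1) = (PowerSeries.coeff (n+1) f
        - ∑ i ∈ (Finset.range n).attach, rc f (i.1+1) * rc f (n - i.1)) / 2 := by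
      rw [rc]
    rw [Finset.sum_attach (Finset.range n) (fun i => rc f (i+1) * rc f (n - i))] at hrec
    simp only [Nat.succ_sub_succ_eq_sub, Nat.sub_zero, Nat.sub_self, h0, one_mul, mul_one]
    have : ∑ i ∈ Finset.range n, rc f (i+1) * rc f (n - i) =
        PowerSeries.coeff (n+1) f - 2 * rc f (n+1) := by
      rw [hrec]; ring
    rw [this]; ring

lemma unit_sq (f : PowerSeries ℂ) (hf : PowerSeries.constantCoeff f ≠ 0) :
    ∃ s : PowerSeries ℂ, s ^ 2 = f := by
  set c := PowerSeries.constantCoeff f with hc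
  obtain ⟨γ, hγ⟩ := IsAlgClosed.exists_pow_nat_eq c (by norm_num : 0 < 2)
  have h1 : PowerSeries.constantCoeff ((PowerSeries.C c⁻¹) * f) = 1 := by
    simp [← hc, inv_mul_cancel₀ hf]
  refine ⟨PowerSeries.C γ * PowerSeries.mk (rc ((PowerSeries.C c⁻¹) * f)), ?_⟩
  rw [mul_pow, rc_sq _ h1, ← map_pow, hγ]
  rw [← mul_assoc, ← map_mul, mul_inv_cancel₀ hf]
  simp

noncomputable abbrev T : LaurentSeries ℂ := HahnSeries.single (1 : ℤ) (1 : ℂ)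

lemma laurent_sq (u : LaurentSeries ℂ) (hu : u ≠ 0) :
    ∃ s : LaurentSeries ℂ, u = s ^ 2 ∨ u = T * s ^ 2 := by
  have hdecomp : u = HahnSeries.single u.order 1 * (ofPowerSeries ℤ ℂ u.powerSeriesPart) := by
    rw [LaurentSeries.ofPowerSeries_powerSeriesPart u, ← mul_assoc,
      HahnSeries.single_mul_single, add_neg_cancel, mul_one, HahnSeries.single_zero_one, one_mul]
  have hcc : PowerSeries.constantCoeff u.powerSeriesPart ≠ 0 := by
    rw [← PowerSeries.coeff_zero_eq_constantCoeff_apply, LaurentSeries.powerSeriesPart_coeff]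
    simpa using HahnSeries.coeff_order_eq_zero.not.2 hu
  obtain ⟨s, hs⟩ := unit_sq _ hcc
  have hps : (ofPowerSeries ℤ ℂ u.powerSeriesPart) = (ofPowerSeries ℤ ℂ s) ^ 2 := by
    rw [← map_pow, hs]
  rcases Int.even_or_odd u.order with ⟨j, hj⟩ | ⟨j, hj⟩
  · refine ⟨HahnSeries.single j 1 * ofPowerSeries ℤ ℂ s, Or.inl ?_⟩
    rw [hdecomp, hps, mul_pow, sq (HahnSeries.single j (1:ℂ)), HahnSeries.single_mul_single,
      mul_one, hj]
  · refine ⟨HahnSeries.single j 1 * ofPowerSeries ℤ ℂ s, Or.inr ?_⟩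
    rw [hdecomp, hps, mul_pow, sq (HahnSeries.single j (1:ℂ)), HahnSeries.single_mul_single,
      mul_one, ← mul_assoc, HahnSeries.single_mul_single, mul_one, hj]
    have : (1:ℤ) + (j + j) = 2*j+1 := by ring
    rw [this]

lemma hT1 : (1 : LaurentSeries ℂ) - T ≠ 0 := by
  intro h
  have h2 : (1 : LaurentSeries ℂ) = T := by linear_combination h
  have := congrArg (fun w : LaurentSeries ℂ => w.coeff 1) h2
  simp [HahnSeries.coeff_single_same, ← HahnSeries.single_zero_one,
    HahnSeries.coeff_single_of_ne] at this

lemma hI2 : (HahnSeries.single (0:ℤ) Complex.I) ^ 2 = (-1 : LaurentSeries ℂ) := by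
  rw [sq, HahnSeries.single_mul_single, Complex.I_mul_I, ← HahnSeries.single_zero_one]
  ext n
  rcases eq_or_ne n (0:ℤ) with rfl | hn
  · simp
  · simp [HahnSeries.coeff_single_of_ne hn, hn]

lemma h2ne : (2 : LaurentSeries ℂ) ≠ 0 := by
  have h : (HahnSeries.C (2:ℂ) : HahnSeries ℤ ℂ) ≠ 0 := HahnSeries.C_ne_zero two_ne_zero
  rwa [map_ofNat] at h

instance : CharZero (LaurentSeries ℂ) where
  cast_injective a b hab := by
    have h : (HahnSeries.C (a:ℂ) : HahnSeries ℤ ℂ) = HahnSeries.C (b:ℂ) := by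
      rwa [map_natCast, map_natCast]
    exact_mod_cast HahnSeries.C_injective h

lemma conic (α β : LaurentSeries ℂ) (hα : α ≠ 0) (hβ : β ≠ 0) :
    ∃ u v : LaurentSeries ℂ, α * u ^ 2 - β = v ^ 2 := by
  obtain ⟨s, hs | hs⟩ := laurent_sq α hα
  · have hs0 : s ≠ 0 := by rintro rfl; exact hα (by simpa using hs)
    refine ⟨(1 + β) / (2 * s), (1 - β) / 2, ?_⟩
    rw [hs]; field_simp [hs0, h2ne]; ring
  · have hs0 : s ≠ 0 := by rintro rfl; exact hα (by simpa using hs)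
    obtain ⟨r, hr | hr⟩ := laurent_sq β hβ
    · refine ⟨0, HahnSeries.single (0:ℤ) Complex.I * r, ?_⟩
      rw [hr, mul_pow, hI2]; ring
    · have hr0 : r ≠ 0 := by rintro rfl; exact hβ (by simpa using hr)
      set σ : LaurentSeries ℂ := 2 * r / (1 - T) with hσdef
      have hσ : (1 - T) * σ = 2 * r := by
        rw [hσdef, mul_div_cancel₀ _ hT1]
      refine ⟨(r + T * σ) / s, T * σ, ?_⟩
      rw [hs, hr]
      clear_value σ
      field_simp [hs0, h2ne]
      linear_combination (-(T * σ)) * hσ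

theorem system_solvable_in_laurentSeries (x y z : LaurentSeries ℂ)
    (h : x ^ 2 + y ^ 2 + z ^ 2 - x * y * z ≠ 4) :
    ∃ a b c d : LaurentSeries ℂ,
      a + d = y ∧ b - c + d * x = z ∧ a * d - b * c = 1 := by
  have hκ : x ^ 2 + y ^ 2 + z ^ 2 - x * y * z - 4 ≠ 0 := sub_ne_zero.mpr h
  by_cases hx : x ^ 2 - 4 = 0
  · -- x² = 4 case
    have he : 2 * x * y - 4 * z ≠ 0 := by
      intro he
      exact hκ (by linear_combination ((2*x*y - 4*z)/16) * he - ((y^2-4)/4) * hx)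
    set c : LaurentSeries ℂ := (4 - y ^ 2) / (2 * x * y - 4 * z) with hcdef
    set d : LaurentSeries ℂ := (y + x * c) / 2 with hddef
    have hc : (2 * x * y - 4 * z) * c = 4 - y ^ 2 := by
      rw [hcdef, mul_div_cancel₀ _ he]
    have hd : 2 * d = y + x * c := by
      rw [hddef, mul_div_cancel₀ _ h2ne]
    refine ⟨y - d, z - d * x + c, c, d, by ring, by ring, ?_⟩
    linear_combination (c^2/4) * hx + (1/4) * hc - (1/4) * (2*d - (y + x*c)) * hd
  · -- x² ≠ 4 case
    have h4 : (4 : LaurentSeries ℂ) ≠ 0 := by norm_num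
    have hβ : 4 * (x ^ 2 + y ^ 2 + z ^ 2 - x * y * z - 4) / (x ^ 2 - 4) ≠ 0 :=
      div_ne_zero (mul_ne_zero h4 hκ) hx
    obtain ⟨u, v, huv⟩ := conic _ _ hx hβ
    have hdiv : (x^2-4) * (4 * (x ^ 2 + y ^ 2 + z ^ 2 - x * y * z - 4) / (x ^ 2 - 4))
        = 4 * (x ^ 2 + y ^ 2 + z ^ 2 - x * y * z - 4) := mul_div_cancel₀ _ hx
    have huv' : (x^2-4)^2 * u^2 - 4 * (x ^ 2 + y ^ 2 + z ^ 2 - x * y * z - 4)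
        = (x^2-4) * v^2 := by
      linear_combination (x^2-4) * huv + hdiv
    set c : LaurentSeries ℂ := u - (x * y - 2 * z) / (x ^ 2 - 4) with hcdef
    set d : LaurentSeries ℂ := (y + x * c + v) / 2 with hddef
    have h1 : (x^2-4) * ((x * y - 2 * z) / (x ^ 2 - 4)) = x * y - 2 * z :=
      mul_div_cancel₀ _ hx
    have hcγ : (x^2-4) * c = (x^2-4) * u - (x * y - 2 * z) := by
      rw [hcdef]; linear_combination -h1
    have hΔ2 : (x^2-4) * ((y + x*c)^2 - 4*c^2 - 4*z*c - 4) = (x^2-4) * v^2 := by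
      linear_combination huv' + ((x^2-4)*c + (x*y - 2*z) + (x^2-4)*u) * hcγ
    have hΔ : (y + x*c)^2 - 4*c^2 - 4*z*c - 4 = v^2 := mul_left_cancel₀ hx hΔ2
    have hd : 2 * d = y + x * c + v := by
      rw [hddef, mul_div_cancel₀ _ h2ne]
    refine ⟨y - d, z - d * x + c, c, d, by ring, by ring, ?_⟩
    linear_combination (1/4) * hΔ - (1/4) * (2*d - (y + x*c) + v) * hd
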